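/- arXiv:2307.00301 — 2 statements merged into one kernel-verified Lean document; each statement's English description precedes it below -/
import Mathlib

section
/- For even n ≥ 4, the word p₂p₃ with p₂ = a₂a₁a₄a₃⋯a_{n−2}a_{n−3}a_n a_{n−1} and p₃ = a_n a_{n−2} a_{n−1} a_{n−4} a_{n−3}⋯a₄a₅a₂a₃a₁ represents the path P_n permutationally. -/
/-!
Both halves of the word are permutations, and for a concatenation of two permutations the letters
`a, b` alternate iff they occur in the same order in both. Since the positions of the letters in
`p₂` and `p₃` are given by explicit involutions of `{0, …, n - 1}`, it remains to check that
two letters have the same relative order in `p₂` and `p₃` exactly when their indices differ by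
one, which is a case analysis on parities.
-/

/-- Letters `a` and `b` alternate in the word `w` if the subword of `w` obtained by
keeping only the occurrences of `a` and `b` has no two equal consecutive letters. -/
def Alternates {V : Type*} [DecidableEq V] (w : List V) (a b : V) : Prop :=
  (w.filter fun x => decide (x = a ∨ x = b)).Chain' (· ≠ ·)

/-- The word `w` represents the simple graph `G`: distinct vertices are adjacent
iff they alternate in `w`. -/
def Represents {V : Type*} [DecidableEq V] (w : List V) (G : SimpleGraph V) : Prop :=
  ∀ a b : V, a ≠ b → (G.Adj a b ↔ Alternates w a b)

/-- The list `p` is a permutation of the type `V`: it has no duplicates and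
contains every element of `V`. -/
def IsPermList {V : Type*} (p : List V) : Prop :=
  p.Nodup ∧ ∀ x : V, x ∈ p

/-- `a` precedes `b` in the list `p`. -/
def Precedes {V : Type*} [DecidableEq V] (p : List V) (a b : V) : Prop :=
  p.idxOf a < p.idxOf b

open Fin.NatCast

section Alternation

variable {α : Type*} [DecidableEq α]

lemma precedes_or_precedes {l : List α} {a b : α} (ha : a ∈ l) (hab : a ≠ b) :
    Precedes l a b ∨ Precedes l b a := by
  unfold Precedes
  have := mt (List.idxOf_inj ha).mp hab
  omega

lemma filter_eq_pair_of_precedes {l : List α} {a b : α} (hl : l.Nodup) (hb : b ∈ l)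
    (hab : Precedes l a b) : l.filter (fun x => decide (x = a ∨ x = b)) = [a, b] := by
  induction l with
  | nil => simp at hb
  | cons x t ih =>
    obtain ⟨hxt, ht⟩ := List.nodup_cons.mp hl
    unfold Precedes at hab
    by_cases hxa : x = a
    · subst hxa
      have hbx : b ≠ x := by rintro rfl; simp at hab
      have hbt : b ∈ t := (List.mem_cons.mp hb).resolve_left hbx
      have htail : t.filter (fun y => decide (y = x ∨ y = b)) = [b] := by
        rw [List.filter_congr (q := fun y => decide (y = b))
          (fun y hy => by simp [show y ≠ x from fun h => hxt (h ▸ hy)]),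
          List.filter_eq, List.count_eq_one_of_mem ht hbt, List.replicate_one]
      rw [List.filter_cons_of_pos (by simp), htail]
    · have hxb : x ≠ b := by rintro rfl; simp at hab
      rw [List.idxOf_cons_ne _ hxa, List.idxOf_cons_ne _ hxb] at hab
      rw [List.filter_cons_of_neg (by simp [hxa, hxb])]
      exact ih ht ((List.mem_cons.mp hb).resolve_left (Ne.symm hxb))
        (Nat.succ_lt_succ_iff.mp hab)

lemma filter_eq_pair_or_swap {l : List α} {a b : α} (hl : IsPermList l) (hab : a ≠ b) :
    l.filter (fun x => decide (x = a ∨ x = b)) = [a, b] ∧ Precedes l a b ∨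
      l.filter (fun x => decide (x = a ∨ x = b)) = [b, a] ∧ ¬Precedes l a b := by
  by_cases h : Precedes l a b
  · exact .inl ⟨filter_eq_pair_of_precedes hl.1 (hl.2 b) h, h⟩
  · refine .inr ⟨?_, h⟩
    rw [← filter_eq_pair_of_precedes hl.1 (hl.2 a)
      ((precedes_or_precedes (hl.2 a) hab).resolve_left h)]
    simp only [or_comm]

lemma alternates_append_iff {p q : List α} (hp : IsPermList p) (hq : IsPermList q) {a b : α}
    (hab : a ≠ b) : Alternates (p ++ q) a b ↔ (Precedes p a b ↔ Precedes q a b) := by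
  rcases filter_eq_pair_or_swap hp hab with ⟨hfp, h₁⟩ | ⟨hfp, h₁⟩ <;>
  rcases filter_eq_pair_or_swap hq hab with ⟨hfq, h₂⟩ | ⟨hfq, h₂⟩ <;>
  · rw [Alternates, List.filter_append, hfp, hfq]
    change List.IsChain _ _ ↔ _
    simp [hab, hab.symm, h₁, h₂]

end Alternation

lemma flatMap_range_pair {α : Type*} (f : ℕ → α) (m : ℕ) :
    (List.range m).flatMap (fun k => [f (2 * k), f (2 * k + 1)]) =
      (List.range (2 * m)).map f := by
  induction m with
  | zero => simp
  | succ m ih =>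
    rw [List.range_succ, List.flatMap_append, ih, Nat.mul_succ, List.range_succ,
      List.range_succ, List.map_append, List.map_append]
    simp

section Involution

variable {n : ℕ} [NeZero n] {f : ℕ → ℕ}

lemma isPermList_map_range (hlt : ∀ m < n, f m < n) (hinv : ∀ m < n, f (f m) = m) :
    IsPermList ((List.range n).map fun m => (f m : Fin n)) := by
  refine ⟨(List.nodup_range).map_on fun x hx y hy hxy => ?_, fun a => ?_⟩
  · rw [List.mem_range] at hx hy
    have hf : f x = f y := by
      simpa [Fin.ext_iff, Fin.val_cast_of_lt (hlt x hx), Fin.val_cast_of_lt (hlt y hy)] using hxy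
    rw [← hinv x hx, ← hinv y hy, hf]
  · exact List.mem_map.mpr ⟨f a, List.mem_range.mpr (hlt a a.isLt), by simp [hinv a a.isLt]⟩

lemma precedes_map_range_iff (hlt : ∀ m < n, f m < n) (hinv : ∀ m < n, f (f m) = m)
    (a b : Fin n) :
    Precedes ((List.range n).map fun m => (f m : Fin n)) a b ↔ f a < f b := by
  have hidx : ∀ c : Fin n, ((List.range n).map fun m => (f m : Fin n)).idxOf c = f c := by
    intro c
    have hc : f c < ((List.range n).map fun m => (f m : Fin n)).length := by
      simpa using hlt c c.isLt
    conv_lhs => rw [show c = ((List.range n).map fun m => (f m : Fin n))[f c] by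
      simp [hinv c c.isLt]]
    exact (isPermList_map_range hlt hinv).1.idxOf_getElem _ hc
  rw [Precedes, hidx, hidx]

end Involution

-- 0-based index of the letter in position `m` of `p₂`, resp. `p₃`. Both maps are involutions of
-- `{0, …, n - 1}`, so they also give the position of a letter.
def p₂Entry (m : ℕ) : ℕ := if m % 2 = 0 then m + 1 else m - 1

def p₃Entry (n m : ℕ) : ℕ :=
  if m = 0 then n - 1 else if m = n - 1 then 0 else if m % 2 = 1 then n - 2 - m else n - m

lemma p₂Entry_lt {n m : ℕ} (hn : Even n) (hm : m < n) : p₂Entry m < n := by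
  rw [Nat.even_iff] at hn; unfold p₂Entry; split_ifs <;> omega

lemma p₂Entry_p₂Entry (m : ℕ) : p₂Entry (p₂Entry m) = m := by
  unfold p₂Entry; split_ifs <;> omega

lemma p₃Entry_lt {n m : ℕ} (hm : m < n) : p₃Entry n m < n := by
  unfold p₃Entry; split_ifs <;> omega

lemma p₃Entry_p₃Entry {n m : ℕ} (hn : Even n) (hm : m < n) :
    p₃Entry n (p₃Entry n m) = m := by
  rw [Nat.even_iff] at hn; unfold p₃Entry; split_ifs <;> omega

lemma adj_iff_p₂Entry_lt_iff_p₃Entry_lt {n x y : ℕ} (hn : Even n) (hx : x < n) (hy : y < n)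
    (hxy : x ≠ y) :
    (x + 1 = y ∨ y + 1 = x) ↔ (p₂Entry x < p₂Entry y ↔ p₃Entry n x < p₃Entry n y) := by
  rw [Nat.even_iff] at hn; unfold p₂Entry p₃Entry; split_ifs <;> omega

lemma exists_eq_two_mul_add_two {n : ℕ} [NeZero n] (hn : Even n) : ∃ m, n = 2 * m + 2 := by
  obtain ⟨r, hr⟩ := hn
  exact ⟨r - 1, by have := NeZero.ne n; omega⟩

lemma p₂_eq_map_range {n : ℕ} [NeZero n] (hn : Even n) :
    ((List.range ((n - 2) / 2)).flatMap fun k =>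
        [((2 * k + 1 : ℕ) : Fin n), ((2 * k : ℕ) : Fin n)]) ++
      [((n - 1 : ℕ) : Fin n), ((n - 2 : ℕ) : Fin n)] =
    (List.range n).map fun m => (p₂Entry m : Fin n) := by
  obtain ⟨m, hm⟩ := exists_eq_two_mul_add_two hn
  have hrange : List.range n = List.range (2 * (m + 1)) := by rw [hm, Nat.mul_succ]
  rw [hrange, ← flatMap_range_pair, List.range_succ, List.flatMap_append,
    show (n - 2) / 2 = m by omega]
  congr 1
  · refine List.flatMap_congr fun k _ => ?_
    simp only [List.cons.injEq, and_true]
    constructor <;> congr 1 <;> unfold p₂Entry <;> split_ifs <;> omega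
  · simp only [List.flatMap_cons, List.flatMap_nil, List.append_nil, List.cons.injEq, and_true]
    constructor <;> congr 1 <;> unfold p₂Entry <;> split_ifs <;> omega

lemma p₃_eq_map_range {n : ℕ} [NeZero n] (hn : Even n) :
    ((n - 1 : ℕ) : Fin n) ::
      (((List.range ((n - 2) / 2)).flatMap fun k =>
        [((n - 3 - 2 * k : ℕ) : Fin n), ((n - 2 - 2 * k : ℕ) : Fin n)]) ++ [(0 : Fin n)]) =
    (List.range n).map fun m => (p₃Entry n m : Fin n) := by
  obtain ⟨m, hm⟩ := exists_eq_two_mul_add_two hn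
  have hrange : List.range n = 0 :: ((List.range (2 * m)).map Nat.succ ++ [2 * m + 1]) := by
    rw [hm, List.range_succ_eq_map, List.range_succ, List.map_append]; rfl
  rw [hrange, List.map_cons, List.map_append, List.map_map, ← flatMap_range_pair,
    show (n - 2) / 2 = m by omega]
  congr 2
  · refine List.flatMap_congr fun k hk => ?_
    rw [List.mem_range] at hk
    simp only [List.cons.injEq, and_true, Function.comp_apply]
    constructor <;> congr 1 <;> simp only [p₃Entry, Nat.succ_ne_zero, if_false] <;> split_ifs <;>
      omega
  · rw [List.map_singleton, show p₃Entry n (2 * m + 1) = 0 by simp [p₃Entry, hm],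
      Nat.cast_zero]

/-- The vertex `a_i` of the paper is `i - 1 : Fin n`. -/
theorem path_word_even_general (n : ℕ) [NeZero n] (heven : Even n) :
    Represents
      ((((List.range ((n - 2) / 2)).flatMap fun k =>
          [((2 * k + 1 : ℕ) : Fin n), ((2 * k : ℕ) : Fin n)]) ++
        [((n - 1 : ℕ) : Fin n), ((n - 2 : ℕ) : Fin n)]) ++
       (((n - 1 : ℕ) : Fin n) ::
        (((List.range ((n - 2) / 2)).flatMap fun k =>
          [((n - 3 - 2 * k : ℕ) : Fin n), ((n - 2 - 2 * k : ℕ) : Fin n)]) ++ [(0 : Fin n)])))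
      (SimpleGraph.pathGraph n) := by
  have h₂lt : ∀ m < n, p₂Entry m < n := fun m => p₂Entry_lt heven
  have h₂inv : ∀ m < n, p₂Entry (p₂Entry m) = m := fun m _ => p₂Entry_p₂Entry m
  have h₃lt : ∀ m < n, p₃Entry n m < n := fun m => p₃Entry_lt
  have h₃inv : ∀ m < n, p₃Entry n (p₃Entry n m) = m := fun m => p₃Entry_p₃Entry heven
  rw [p₂_eq_map_range heven, p₃_eq_map_range heven]
  intro a b hab
  rw [alternates_append_iff (isPermList_map_range h₂lt h₂inv)
      (isPermList_map_range h₃lt h₃inv) hab,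
    precedes_map_range_iff h₂lt h₂inv, precedes_map_range_iff h₃lt h₃inv,
    SimpleGraph.pathGraph_adj]
  exact adj_iff_p₂Entry_lt_iff_p₃Entry_lt heven a.isLt b.isLt (Fin.val_ne_of_ne hab)

/-- For even `n ≥ 4`, the word `p₂p₃` with `p₂ = a₂a₁a₄a₃⋯a_{n−2}a_{n−3}a_n a_{n−1}` and
`p₃ = a_n a_{n−2}a_{n−1}a_{n−4}a_{n−3}⋯a₄a₅a₂a₃a₁` represents the path `P_n`
permutationally. Here `a_i` is the vertex `i - 1 : Fin n`. -/
theorem path_word_even (n : ℕ) [NeZero n] (hn : 4 ≤ n) (heven : Even n) :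
    Represents
      ((((List.range ((n - 2) / 2)).flatMap fun k =>
          [((2 * k + 1 : ℕ) : Fin n), ((2 * k : ℕ) : Fin n)]) ++
        [((n - 1 : ℕ) : Fin n), ((n - 2 : ℕ) : Fin n)]) ++
       (((n - 1 : ℕ) : Fin n) ::
        (((List.range ((n - 2) / 2)).flatMap fun k =>
          [((n - 3 - 2 * k : ℕ) : Fin n), ((n - 2 - 2 * k : ℕ) : Fin n)]) ++ [(0 : Fin n)])))
      (SimpleGraph.pathGraph n) :=
  path_word_even_general n heven
end

section
/- For even n ≥ 6, the cycle C_n has permutation-representation number exactly 3. -/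
/-- The permutation-representation number of `G`: the least `k ≥ 1` such that `G` is
represented by a concatenation of `k` permutations of its vertex set. -/
noncomputable def prn {V : Type*} [DecidableEq V] (G : SimpleGraph V) : ℕ :=
  sInf {k | 0 < k ∧ ∃ ps : List (List V), ps.length = k ∧
    (∀ p ∈ ps, IsPermList p) ∧ Represents ps.flatten G}

/-!
The occurrences of two distinct letters in a permutation read `ab` or `ba`, so `a` and `b`
alternate in a concatenation of permutations iff they appear in the same order in every one of
them: a word made of `k` permutations represents exactly the comparability graph of the
intersection of `k` linear orders.

Two orders `f`, `g` are too few for `C_n`, `n ≥ 6`. If `x - v - y` is an induced path and `z` is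
adjacent to none of `x`, `v`, `y`, then `z` cannot lie between `x` and `y` in `f`. Applied to the
two halves of an induced path `c - v₁ - a - v₂ - b` centred at the `f`-largest vertex `a`, this
gives both `f b < f c` and `f c < f b`.

Three orders suffice for even `n`: two of them represent the path `0 - 1 - ⋯ - (n-2)` with
`n - 1` on top, and the third moves `n - 1` below all its non-neighbours.
-/

open Function

section PermutationWords

variable {V : Type*} [DecidableEq V]

theorem List.Pairwise.rel_of_idxOf_lt {r : V → V → Prop} {l : List V} (hl : l.Pairwise r)
    {a b : V} (ha : a ∈ l) (hb : b ∈ l) (h : l.idxOf a < l.idxOf b) : r a b := by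
  simpa only [List.getElem_idxOf] using
    List.pairwise_iff_getElem.1 hl _ _ (List.idxOf_lt_length_iff.2 ha)
      (List.idxOf_lt_length_iff.2 hb) h

theorem List.Nodup.pairwise_precedes {l : List V} (hl : l.Nodup) : l.Pairwise (Precedes l) := by
  rw [List.pairwise_iff_getElem]
  intro i j hi hj hij
  simpa only [Precedes, hl.idxOf_getElem] using hij

theorem alternates_iff_isChain {w : List V} {a b : V} :
    Alternates w a b ↔ (w.filter fun x => decide (x = a ∨ x = b)).IsChain (· ≠ ·) :=
  Iff.rfl

instance (p : List V) : DecidableRel (Precedes p) :=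
  fun a b => inferInstanceAs (Decidable (p.idxOf a < p.idxOf b))

namespace IsPermList

variable {p : List V} {a b : V}

theorem injective_idxOf (hp : IsPermList p) : Injective p.idxOf :=
  fun a _ h => (List.idxOf_inj (hp.2 a)).1 h

theorem not_precedes_iff (hp : IsPermList p) (hab : a ≠ b) :
    ¬ Precedes p a b ↔ Precedes p b a := by
  have := hp.injective_idxOf.ne hab
  unfold Precedes
  omega

theorem filter_eq_ite (hp : IsPermList p) (hab : a ≠ b) :
    p.filter (fun x => decide (x = a ∨ x = b)) = if Precedes p a b then [a, b] else [b, a] := by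
  have hperm : (p.filter (fun x => decide (x = a ∨ x = b))).Perm [a, b] :=
    (List.perm_ext_iff_of_nodup (hp.1.filter _) (by simp [hab])).2 fun x => by simp [hp.2]
  have hsorted := hp.1.pairwise_precedes.filter (fun x => decide (x = a ∨ x = b))
  rcases List.perm_pair.1 hperm with h | h <;> rw [h] at hsorted ⊢
  · rw [if_pos (by simpa using hsorted)]
  · rw [if_neg ((hp.not_precedes_iff hab).2 (by simpa using hsorted))]

end IsPermList

theorem alternates_cons_flatten_iff {p : List V} {ps : List (List V)}
    (hps : ∀ q ∈ p :: ps, IsPermList q) {a b : V} (hab : a ≠ b) :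
    Alternates (p :: ps).flatten a b ↔ ∀ q ∈ ps, (Precedes q a b ↔ Precedes p a b) := by
  induction ps generalizing p with
  | nil =>
    rw [alternates_iff_isChain, List.flatten_cons, List.flatten_nil, List.append_nil,
      (hps p (by simp)).filter_eq_ite hab]
    split_ifs <;> simp [hab, hab.symm]
  | cons q ps ih =>
    have ih := ih (p := q) (fun r hr => hps r (List.mem_cons_of_mem _ hr))
    rw [alternates_iff_isChain] at ih ⊢
    rw [List.flatten_cons, List.filter_append, (hps p (by simp)).filter_eq_ite hab]
    rw [List.flatten_cons, List.filter_append, (hps q (by simp)).filter_eq_ite hab] at ih ⊢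
    have hba : b ≠ a := hab.symm
    split_ifs at ih ⊢ <;> simp_all [List.isChain_cons_cons]

theorem alternates_flatten_iff {ps : List (List V)} (hps : ∀ p ∈ ps, IsPermList p)
    {a b : V} (hab : a ≠ b) :
    Alternates ps.flatten a b ↔ (∀ p ∈ ps, Precedes p a b) ∨ (∀ p ∈ ps, Precedes p b a) := by
  cases ps with
  | nil => simp [alternates_iff_isChain]
  | cons p ps =>
    rw [alternates_cons_flatten_iff hps hab]
    rw [← forall₂_congr fun q hq => (hps q hq).not_precedes_iff hab]
    by_cases h : Precedes p a b <;> simp [h]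

theorem represents_flatten_iff {ps : List (List V)} (hps : ∀ p ∈ ps, IsPermList p)
    {G : SimpleGraph V} : Represents ps.flatten G ↔ ∀ a b, a ≠ b →
      (G.Adj a b ↔ (∀ p ∈ ps, Precedes p a b) ∨ (∀ p ∈ ps, Precedes p b a)) :=
  forall₂_congr fun _ _ => forall_congr' fun hab => by rw [alternates_flatten_iff hps hab]

theorem exists_isPermList_precedes_iff [Fintype V] (k : V → ℕ) (hk : Injective k) :
    ∃ p : List V, IsPermList p ∧ ∀ a b, Precedes p a b ↔ k a < k b := by
  let p := (Finset.univ : Finset V).toList.mergeSort (fun a b => decide (k a ≤ k b))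
  have hperm : p.Perm Finset.univ.toList := List.mergeSort_perm _ _
  have hp : IsPermList p := ⟨hperm.nodup_iff.2 (Finset.nodup_toList _), fun x => by simp [p]⟩
  have hsorted : p.Pairwise (fun a b => k a < k b) :=
    ((List.pairwise_mergeSort (fun _ _ _ => by simpa using le_trans)
      (fun a b => by simpa using le_total (k a) (k b)) _).and hp.1).imp
      fun ⟨hle, hne⟩ => lt_of_le_of_ne (by simpa using hle) (hk.ne hne)
  refine ⟨p, hp, fun a b => ⟨hsorted.rel_of_idxOf_lt (hp.2 a) (hp.2 b), fun h => ?_⟩⟩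
  by_contra hab
  have hba := hsorted.rel_of_idxOf_lt (hp.2 b) (hp.2 a)
    ((hp.not_precedes_iff (hk.ne_iff.1 h.ne)).1 hab)
  omega

end PermutationWords

namespace SimpleGraph

theorem cycleGraph_adj_of_lt {n : ℕ} {u v : Fin n} (h : u < v) :
    (cycleGraph n).Adj u v ↔ u.val + 1 = v.val ∨ (u.val = 0 ∧ v.val + 1 = n) := by
  rw [cycleGraph_adj', Fin.sub_val_of_le h.le, Fin.coe_sub_iff_lt.2 h]
  have := v.isLt
  rw [Fin.lt_def] at h
  omega

def pathGraphEmbeddingCycleGraph {m n : ℕ} (h : m < n) : pathGraph m ↪g cycleGraph n where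
  toEmbedding := Fin.castLEEmb h.le
  map_rel_iff' {i j} := by
    have key {i j : Fin m} (hij : i < j) :
        (cycleGraph n).Adj (Fin.castLE h.le i) (Fin.castLE h.le j) ↔ (pathGraph m).Adj i j := by
      rw [cycleGraph_adj_of_lt (by simpa using hij), pathGraph_adj]
      simp only [Fin.lt_def, Fin.val_castLE] at hij ⊢
      omega
    rcases lt_trichotomy i j with hij | rfl | hij
    · exact key hij
    · simp
    · rw [adj_comm, (pathGraph m).adj_comm]
      exact key hij

def cycleGraph.rotate {n : ℕ} [NeZero n] (d : Fin n) : cycleGraph n ≃g cycleGraph n where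
  toEquiv := Equiv.addRight d
  map_rel_iff' := by simp [cycleGraph_adj', add_sub_add_right_eq_sub]

theorem exists_pathGraph_embedding_cycleGraph {m n : ℕ} (h : m < n) (i : Fin m) (a : Fin n) :
    ∃ φ : pathGraph m ↪g cycleGraph n, φ i = a := by
  have : NeZero n := ⟨by omega⟩
  let ψ := pathGraphEmbeddingCycleGraph h
  exact ⟨ψ.trans (cycleGraph.rotate (a - ψ i)).toEmbedding, add_sub_cancel (ψ i) a⟩

end SimpleGraph

section TwoLinearOrders

open SimpleGraph

variable {V : Type*} {G : SimpleGraph V} {f g : V → ℕ}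

-- In the intersection of the orders `f` and `g`, `x` and `y` are comparable to `v` but not to
-- each other, so they lie on the same side of `v`.
theorem lt_of_lt_of_adj_of_adj (hf : Injective f) (hg : Injective g)
    (H : ∀ a b, a ≠ b → (G.Adj a b ↔ (f a < f b ↔ g a < g b))) {x y v z : V}
    (hxv : G.Adj x v) (hyv : G.Adj y v) (hxy : x ≠ y) (hxy' : ¬ G.Adj x y)
    (hzy : z ≠ y) (hzx : ¬ G.Adj z x) (hzy' : ¬ G.Adj z y) (hzv : ¬ G.Adj z v)
    (h : f z < f x) : f z < f y := by
  have hzx₀ : z ≠ x := by rintro rfl; omega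
  have hzv₀ : z ≠ v := by rintro rfl; exact hzx hxv.symm
  have := (H x v hxv.ne).1 hxv
  have := (H y v hyv.ne).1 hyv
  have := mt (H x y hxy).2 hxy'
  have := mt (H z x hzx₀).2 hzx
  have := mt (H z y hzy).2 hzy'
  have := mt (H z v hzv₀).2 hzv
  have := hf.ne hzy
  have := hf.ne hzv₀
  have := hg.ne hzy
  have := hg.ne hzv₀
  have := hf.ne hxv.ne
  have := hg.ne hyv.ne
  omega

theorem lt_apply_of_pathGraph_embedding (hf : Injective f) (hg : Injective g)
    (H : ∀ a b, a ≠ b → (G.Adj a b ↔ (f a < f b ↔ g a < g b))) (φ : pathGraph 5 ↪g G) :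
    f (φ 2) < f (φ 0) ∨ f (φ 2) < f (φ 4) := by
  have adj (i j : Fin 5) : G.Adj (φ i) (φ j) ↔ i.val + 1 = j.val ∨ j.val + 1 = i.val := by
    rw [φ.map_adj_iff, pathGraph_adj]
  have ne {i j : Fin 5} (h : i ≠ j) : φ i ≠ φ j := φ.injective.ne h
  have h₀ : f (φ 0) < f (φ 2) → f (φ 0) < f (φ 4) :=
    lt_of_lt_of_adj_of_adj hf hg H ((adj 2 3).2 (by decide)) ((adj 4 3).2 (by decide))
      (ne (by decide)) (mt (adj 2 4).1 (by decide)) (ne (by decide))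
      (mt (adj 0 2).1 (by decide)) (mt (adj 0 4).1 (by decide)) (mt (adj 0 3).1 (by decide))
  have h₄ : f (φ 4) < f (φ 2) → f (φ 4) < f (φ 0) :=
    lt_of_lt_of_adj_of_adj hf hg H ((adj 2 1).2 (by decide)) ((adj 0 1).2 (by decide))
      (ne (by decide)) (mt (adj 2 0).1 (by decide)) (ne (by decide))
      (mt (adj 4 2).1 (by decide)) (mt (adj 4 0).1 (by decide)) (mt (adj 4 1).1 (by decide))
  have := hf.ne (ne (show (0 : Fin 5) ≠ 2 by decide))
  have := hf.ne (ne (show (4 : Fin 5) ≠ 2 by decide))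
  omega

theorem not_forall_cycleGraph_adj_iff {n : ℕ} (hn : 6 ≤ n) {f g : Fin n → ℕ}
    (hf : Injective f) (hg : Injective g) :
    ¬ ∀ a b, a ≠ b → ((cycleGraph n).Adj a b ↔ (f a < f b ↔ g a < g b)) := by
  intro H
  have : Nonempty (Fin n) := ⟨⟨0, by omega⟩⟩
  obtain ⟨a, ha⟩ := Finite.exists_max f
  obtain ⟨φ, rfl⟩ := exists_pathGraph_embedding_cycleGraph (by omega : 5 < n) 2 a
  rcases lt_apply_of_pathGraph_embedding hf hg H φ with h | h <;> exact (ha _).not_gt h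

theorem three_le_length_of_represents_cycleGraph {n : ℕ} (hn : 6 ≤ n)
    {ps : List (List (Fin n))} (hps : ∀ p ∈ ps, IsPermList p) (hne : ps ≠ [])
    (h : Represents ps.flatten (cycleGraph n)) : 3 ≤ ps.length := by
  rw [represents_flatten_iff hps] at h
  by_contra hlt
  obtain ⟨p, q, hp, hq, hpq⟩ :
      ∃ p q, IsPermList p ∧ IsPermList q ∧ ∀ r, r ∈ ps ↔ r = p ∨ r = q := by
    match ps, hne, hlt with
    | [p], _, _ => exact ⟨p, p, hps p (by simp), hps p (by simp), by simp⟩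
    | [p, q], _, _ => exact ⟨p, q, hps p (by simp), hps q (by simp), by simp⟩
    | _ :: _ :: _ :: _, _, hlt => simp at hlt
  refine not_forall_cycleGraph_adj_iff hn hp.injective_idxOf hq.injective_idxOf fun a b hab => ?_
  have := hp.injective_idxOf.ne hab
  have := hq.injective_idxOf.ne hab
  simp only [h a b hab, hpq, forall_eq_or_imp, forall_eq, Precedes]
  omega

end TwoLinearOrders

namespace SimpleGraph.cycleGraph

variable {n : ℕ}

/- Sort keys of the three orders of `Fin n`, `n` even:
`0, 2, 1, 4, 3, …, n-2, n-3, n-1`, then `n-2, n-4, n-3, n-6, n-5, …, 0, 1, n-1`,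
then `0, n-2, n-1, 2, 1, 4, 3, …, n-4, n-5, n-3`. -/
def key₁ (m : ℕ) : ℕ := m + 2 * (m % 2)

def key₂ (n m : ℕ) : ℕ := if m = n - 1 then n + 2 else n - m + 2 * (m % 2)

def key₃ (n m : ℕ) : ℕ :=
  if m = 0 then 0 else if m = n - 2 then 1 else if m = n - 1 then 2 else key₁ m + 2

theorem key₁_injective : Injective key₁ := fun a b h => by
  simp only [key₁] at h
  omega

theorem key₂_injOn (n : ℕ) : Set.InjOn (key₂ n) (Set.Iio n) := fun a ha b hb h => by
  simp only [key₂, Set.mem_Iio] at h ha hb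
  split_ifs at h <;> omega

theorem key₃_injOn (n : ℕ) : Set.InjOn (key₃ n) (Set.Iio n) := fun a ha b hb h => by
  simp only [key₃, key₁, Set.mem_Iio] at h ha hb
  split_ifs at h <;> omega

theorem adj_iff_keys_of_lt {n a b : ℕ} (hn : 6 ≤ n) (he : Even n) (hb : b < n) (hab : a < b) :
    (a + 1 = b ∨ (a = 0 ∧ b + 1 = n)) ↔
      (key₁ a < key₁ b ∧ key₂ n a < key₂ n b ∧ key₃ n a < key₃ n b) ∨
      (key₁ b < key₁ a ∧ key₂ n b < key₂ n a ∧ key₃ n b < key₃ n a) := by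
  rw [Nat.even_iff] at he
  simp only [key₁, key₂, key₃]
  split_ifs <;> omega

theorem adj_iff_keys (hn : 6 ≤ n) (he : Even n) {u v : Fin n} (huv : u ≠ v) :
    (cycleGraph n).Adj u v ↔
      (key₁ u < key₁ v ∧ key₂ n u < key₂ n v ∧ key₃ n u < key₃ n v) ∨
      (key₁ v < key₁ u ∧ key₂ n v < key₂ n u ∧ key₃ n v < key₃ n u) := by
  wlog h : u < v generalizing u v
  · rw [adj_comm, or_comm]
    exact this huv.symm (lt_of_le_of_ne (not_lt.1 h) huv.symm)
  rw [cycleGraph_adj_of_lt h]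
  exact adj_iff_keys_of_lt hn he v.isLt h

theorem exists_represents (hn : 6 ≤ n) (he : Even n) :
    ∃ ps : List (List (Fin n)), ps.length = 3 ∧ (∀ p ∈ ps, IsPermList p) ∧
      Represents ps.flatten (cycleGraph n) := by
  obtain ⟨p₁, hp₁, h₁⟩ := exists_isPermList_precedes_iff (fun v : Fin n => key₁ v)
    (key₁_injective.comp Fin.val_injective)
  obtain ⟨p₂, hp₂, h₂⟩ := exists_isPermList_precedes_iff (fun v : Fin n => key₂ n v)
    fun u v h => Fin.ext (key₂_injOn n u.isLt v.isLt h)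
  obtain ⟨p₃, hp₃, h₃⟩ := exists_isPermList_precedes_iff (fun v : Fin n => key₃ n v)
    fun u v h => Fin.ext (key₃_injOn n u.isLt v.isLt h)
  have hps : ∀ p ∈ [p₁, p₂, p₃], IsPermList p := by simp [hp₁, hp₂, hp₃]
  refine ⟨[p₁, p₂, p₃], rfl, hps, (represents_flatten_iff hps).2 fun u v huv => ?_⟩
  simpa [h₁, h₂, h₃] using adj_iff_keys hn he huv

end SimpleGraph.cycleGraph

/-- For even `n ≥ 6`, the cycle `C_n` has permutation-representation number exactly 3. -/
theorem prn_cycleGraph (n : ℕ) (hn : 6 ≤ n) (heven : Even n) :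
    prn (SimpleGraph.cycleGraph n) = 3 := by
  obtain ⟨ps, hlen, hps, hrep⟩ := SimpleGraph.cycleGraph.exists_represents hn heven
  refine le_antisymm (Nat.sInf_le ⟨by norm_num, ps, hlen, hps, hrep⟩)
    (le_csInf ⟨3, by norm_num, ps, hlen, hps, hrep⟩ ?_)
  rintro k ⟨hk, ps, rfl, hps, hrep⟩
  exact three_le_length_of_represents_cycleGraph hn hps (List.ne_nil_of_length_pos hk) hrep
end
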